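/- Let ε : (0, ∞) → ℝ≥0 be a function such that for every x > 0 the series Σ_{n=0}^∞ ε(x + n) converges, with sum Φ(x). Then for every function f : (0, ∞) → ℝ satisfying |f(x+1) − f(x) − 1/x| ≤ ε(x) for all x > 0, there exists a unique function f₀ : (0, ∞) → ℝ satisfying the Digamma functional equation f₀(x+1) = f₀(x) + 1/x for all x > 0 and |f(x) − f₀(x)| ≤ Φ(x) for all x > 0. -/
import Mathlib

open Filter Topology

namespace StabilityDigammaAux

abbrev P := {x : ℝ // 0 < x}

def sh (x : P) (n : ℕ) : P := ⟨x.1 + n, by have := x.2; positivity⟩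

def succP (x : P) : P := ⟨x.1 + 1, by have := x.2; positivity⟩

lemma sh_zero (x : P) : sh x 0 = x := Subtype.ext (by simp [sh])

lemma sh_succP (x : P) (n : ℕ) : sh (succP x) n = sh x (n + 1) :=
  Subtype.ext (by simp only [sh, succP]; push_cast; ring)

lemma succP_sh (x : P) (n : ℕ) : succP (sh x n) = sh x (n + 1) :=
  Subtype.ext (by simp only [sh, succP]; push_cast; ring)

lemma sh_sh (x : P) (n k : ℕ) : sh (sh x n) k = sh x (n + k) :=
  Subtype.ext (by simp only [sh]; push_cast; ring)

end StabilityDigammaAux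

open StabilityDigammaAux Filter Topology

theorem stability_digamma_equation
    (ε Φ : {x : ℝ // 0 < x} → NNReal)
    (hΦ : ∀ x : {x : ℝ // 0 < x},
      HasSum (fun n : ℕ => ε ⟨x.1 + n, by have := x.2; positivity⟩) (Φ x))
    (f : {x : ℝ // 0 < x} → ℝ)
    (hf : ∀ x : {x : ℝ // 0 < x},
      |f ⟨x.1 + 1, by have := x.2; positivity⟩ - f x - 1 / x.1| ≤ ε x) :
    ∃! f₀ : {x : ℝ // 0 < x} → ℝ,
      (∀ x : {x : ℝ // 0 < x},
        f₀ ⟨x.1 + 1, by have := x.2; positivity⟩ = f₀ x + 1 / x.1) ∧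
      ∀ x : {x : ℝ // 0 < x}, |f x - f₀ x| ≤ Φ x := by
  classical
  set g : P → ℝ := fun x => f (succP x) - f x - 1 / x.1 with hg_def
  have hgε : ∀ x : P, |g x| ≤ ε x := fun x => hf x
  have hΦ' : ∀ x : P, HasSum (fun n : ℕ => ((ε (sh x n) : ℝ))) (Φ x) := fun x =>
    NNReal.hasSum_coe.2 (hΦ x)
  have hεsum : ∀ x : P, Summable (fun n : ℕ => ((ε (sh x n) : ℝ))) := fun x =>
    (hΦ' x).summable
  have hΦeq : ∀ x : P, (Φ x : ℝ) = ∑' n : ℕ, (ε (sh x n) : ℝ) := fun x =>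
    (hΦ' x).tsum_eq.symm
  have hgabs : ∀ x : P, Summable (fun n : ℕ => |g (sh x n)|) := fun x =>
    Summable.of_nonneg_of_le (fun n => abs_nonneg _) (fun n => hgε (sh x n)) (hεsum x)
  have hgsum : ∀ x : P, Summable (fun n : ℕ => g (sh x n)) := fun x =>
    (hgabs x).of_abs
  set F : P → ℝ := fun x => f x + ∑' n : ℕ, g (sh x n) with hF_def
  have hFeq : ∀ x : P, F (succP x) = F x + 1 / x.1 := by
    intro x
    have h2 : ∑' n : ℕ, g (sh x n) = g x + ∑' n : ℕ, g (sh x (n + 1)) := by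
      rw [Summable.tsum_eq_zero_add (hgsum x), sh_zero]
    have h1 : ∑' n : ℕ, g (sh (succP x) n) = ∑' n : ℕ, g (sh x (n + 1)) :=
      tsum_congr fun n => by rw [sh_succP]
    have hgx : g x = f (succP x) - f x - 1 / x.1 := rfl
    show f (succP x) + ∑' n : ℕ, g (sh (succP x) n)
        = f x + ∑' n : ℕ, g (sh x n) + 1 / x.1
    rw [h1, h2, hgx]; ring
  have hFbound : ∀ x : P, |f x - F x| ≤ Φ x := by
    intro x
    have he : f x - F x = -(∑' n : ℕ, g (sh x n)) := by
      show f x - (f x + ∑' n : ℕ, g (sh x n)) = _; ring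
    rw [he, abs_neg]
    have hnorm : Summable (fun n : ℕ => ‖g (sh x n)‖) := by
      simpa only [Real.norm_eq_abs] using hgabs x
    calc |∑' n : ℕ, g (sh x n)| ≤ ∑' n : ℕ, |g (sh x n)| := by
          have h := norm_tsum_le_tsum_norm hnorm
          simpa only [Real.norm_eq_abs] using h
      _ ≤ ∑' n : ℕ, (ε (sh x n) : ℝ) :=
          Summable.tsum_le_tsum (fun n => hgε (sh x n)) (hgabs x) (hεsum x)
      _ = Φ x := (hΦeq x).symm
  have hΦtail : ∀ x : P, Tendsto (fun n : ℕ => ((Φ (sh x n)) : ℝ)) atTop (𝓝 0) := by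
    intro x
    have heq : ∀ n : ℕ, ((Φ (sh x n)) : ℝ) = ∑' k : ℕ, (ε (sh x (k + n)) : ℝ) := by
      intro n
      rw [hΦeq (sh x n)]
      exact tsum_congr fun k => by rw [sh_sh, Nat.add_comm n k]
    simp only [heq]
    exact tendsto_sum_nat_add fun n => ((ε (sh x n)) : ℝ)
  refine ⟨F, ⟨fun x => hFeq x, hFbound⟩, ?_⟩
  rintro f₁ ⟨hf₁eq, hf₁b⟩
  funext x
  have hd : ∀ n : ℕ, f₁ (sh x n) - F (sh x n) = f₁ x - F x := by
    intro n
    induction n with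
    | zero => rw [sh_zero]
    | succ n ih =>
      have e1 : f₁ (sh x (n + 1)) = f₁ (sh x n) + 1 / (sh x n).1 := by
        rw [← succP_sh]; exact hf₁eq (sh x n)
      have e2 : F (sh x (n + 1)) = F (sh x n) + 1 / (sh x n).1 := by
        rw [← succP_sh]; exact hFeq (sh x n)
      rw [e1, e2, ← ih]; ring
  have hbnd : ∀ n : ℕ, |f₁ x - F x| ≤ 2 * ((Φ (sh x n)) : ℝ) := by
    intro n
    rw [← hd n]
    have h1 := hf₁b (sh x n)
    have h2 := hFbound (sh x n)
    calc |f₁ (sh x n) - F (sh x n)|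
        = |(f (sh x n) - F (sh x n)) - (f (sh x n) - f₁ (sh x n))| := by congr 1; ring
      _ ≤ |f (sh x n) - F (sh x n)| + |f (sh x n) - f₁ (sh x n)| := abs_sub _ _
      _ ≤ 2 * ((Φ (sh x n)) : ℝ) := by linarith
  have hzero : |f₁ x - F x| ≤ 0 := by
    have hlim : Tendsto (fun n : ℕ => 2 * ((Φ (sh x n)) : ℝ)) atTop (𝓝 0) := by
      simpa using (hΦtail x).const_mul 2
    exact ge_of_tendsto' hlim hbnd
  have h0 : f₁ x - F x = 0 := abs_eq_zero.1 (le_antisymm hzero (abs_nonneg _))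
  linarith
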